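/- Σ_{n=1}^∞ (−1)^{n−1} / (3^n · C(4n,2n)) = 1/49 − 10√3·π/1029 + (27/343)·ln 3. -/

import Mathlib

/-!
The Beta integral gives `1 / C(4n+4, 2n+2) = (4n+5) ∫₀¹ (t(1-t))^(2n+2) dt`. With `x = t(1-t)`,
the series `∑ (-1)^n (4n+5) x^(2n+2) / 3^(n+1)` sums to the rational function
`(15x² + x⁴) / (3 + x²)²`, and by dominated convergence the series of the theorem is the
integral of this function over `[0, 1]`, which has an elementary primitive built from
logarithms, arctangents and rational functions.
-/

open MeasureTheory Real
open scoped Nat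

theorem hasSum_linear_mul_geometric {𝕜 : Type*} [NormedField 𝕜] [CompleteSpace 𝕜]
    {r : 𝕜} (hr : ‖r‖ < 1) (a b : 𝕜) :
    HasSum (fun n : ℕ => (a * n + b) * r ^ n) (a * r / (1 - r) ^ 2 + b / (1 - r)) := by
  rw [mul_div_assoc, div_eq_mul_inv b]
  exact (((hasSum_coe_mul_geometric_of_norm_lt_one hr).mul_left a).add
    ((hasSum_geometric_of_norm_lt_one hr).mul_left b)).congr_fun fun n => by ring

theorem hasSum_neg_one_pow_mul_four_mul_add_five {x : ℝ} (hx : x ^ 2 < 3) :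
    HasSum (fun n : ℕ => (-1) ^ n * (4 * n + 5) * x ^ (2 * n + 2) / 3 ^ (n + 1))
      ((15 * x ^ 2 + x ^ 4) / (3 + x ^ 2) ^ 2) := by
  have hr : ‖-(x ^ 2 / 3)‖ < 1 := by
    rw [norm_neg, Real.norm_eq_abs, abs_of_nonneg (by positivity)]; linarith
  have h := (hasSum_linear_mul_geometric hr 4 5).mul_left (x ^ 2 / 3)
  rw [sub_neg_eq_add,
    show x ^ 2 / 3 * (4 * -(x ^ 2 / 3) / (1 + x ^ 2 / 3) ^ 2 + 5 / (1 + x ^ 2 / 3))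
      = (15 * x ^ 2 + x ^ 4) / (3 + x ^ 2) ^ 2 by field_simp; ring] at h
  exact h.congr_fun fun n => by rw [neg_pow (x ^ 2 / 3), div_pow]; ring

theorem integral_pow_mul_one_sub_pow (a b : ℕ) :
    ∫ x in (0 : ℝ)..1, x ^ a * (1 - x) ^ b = a ! * b ! / (a + b + 1)! := by
  have h := Complex.betaIntegral_eq_Gamma_mul_div (a + 1) (b + 1)
    (by simp; positivity) (by simp; positivity)
  rw [show (a + 1 : ℂ) + (b + 1) = (a + b + 1 : ℕ) + 1 by push_cast; ring,
    Complex.Gamma_nat_eq_factorial, Complex.Gamma_nat_eq_factorial,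
    Complex.Gamma_nat_eq_factorial, Complex.betaIntegral] at h
  simp only [add_sub_cancel_right] at h
  have hofReal : ∫ x in (0 : ℝ)..1, (x : ℂ) ^ (a : ℂ) * (1 - (x : ℂ)) ^ (b : ℂ)
      = ((∫ x in (0 : ℝ)..1, x ^ a * (1 - x) ^ b : ℝ) : ℂ) := by
    rw [← intervalIntegral.integral_ofReal]
    simp only [Complex.cpow_natCast]
    push_cast
    rfl
  rw [hofReal] at h
  apply Complex.ofReal_injective
  rw [h]
  push_cast
  ring

theorem inv_add_choose_eq_integral (a b : ℕ) :
    (((a + b).choose a : ℕ) : ℝ)⁻¹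
      = (a + b + 1) * ∫ x in (0 : ℝ)..1, x ^ a * (1 - x) ^ b := by
  rw [integral_pow_mul_one_sub_pow, Nat.factorial_succ]
  have h : ((a + b).choose a * a ! * b ! : ℝ) = (a + b)! := by
    rw [Nat.choose_symm_add]
    exact_mod_cast Nat.add_choose_mul_factorial_mul_factorial a b
  push_cast
  rw [← h]
  field_simp

theorem integral_neg_one_pow_mul_four_mul_add_five (n : ℕ) :
    ∫ t in (0 : ℝ)..1, (-1) ^ n * (4 * n + 5) * (t * (1 - t)) ^ (2 * n + 2) / 3 ^ (n + 1)
      = (-1) ^ n / (3 ^ (n + 1) * ((4 * (n + 1)).choose (2 * (n + 1)) : ℝ)) := by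
  have h := inv_add_choose_eq_integral (2 * (n + 1)) (2 * (n + 1))
  rw [show 2 * (n + 1) + 2 * (n + 1) = 4 * (n + 1) by ring] at h
  simp_rw [mul_pow]
  rw [intervalIntegral.integral_div, intervalIntegral.integral_const_mul, div_mul_eq_div_div,
    div_eq_mul_inv _ (((4 * (n + 1)).choose (2 * (n + 1)) : ℕ) : ℝ), h,
    show 2 * (n + 1) = 2 * n + 2 by ring]
  push_cast
  ring

theorem norm_neg_one_pow_mul_four_mul_add_five_le {x : ℝ} (hx : |x| ≤ 1) (n : ℕ) :
    ‖(-1) ^ n * (4 * n + 5) * x ^ (2 * n + 2) / 3 ^ (n + 1)‖ ≤ (4 * n + 5) * (1 / 3) ^ n := by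
  have h5 : |(4 * n + 5 : ℝ)| = 4 * n + 5 := abs_of_pos (by positivity)
  simp only [norm_div, norm_mul, norm_pow, norm_neg, norm_one, one_pow, one_mul, Real.norm_eq_abs,
    h5, Nat.abs_ofNat]
  calc (4 * n + 5) * |x| ^ (2 * n + 2) / 3 ^ (n + 1)
      ≤ (4 * n + 5) * 1 / 3 ^ (n + 1) := by gcongr; exact pow_le_one₀ (abs_nonneg x) hx
    _ ≤ (4 * n + 5) * 1 / 3 ^ n := by gcongr <;> norm_num
    _ = (4 * n + 5) * (1 / 3) ^ n := by rw [one_div_pow, mul_one_div, mul_one]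

theorem hasSum_integral_neg_one_pow_mul_four_mul_add_five :
    HasSum
      (fun n : ℕ =>
        ∫ t in (0 : ℝ)..1, (-1) ^ n * (4 * n + 5) * (t * (1 - t)) ^ (2 * n + 2) / 3 ^ (n + 1))
      (∫ t in (0 : ℝ)..1,
        (15 * (t * (1 - t)) ^ 2 + (t * (1 - t)) ^ 4) / (3 + (t * (1 - t)) ^ 2) ^ 2) := by
  have hx : ∀ t ∈ Set.uIoc (0 : ℝ) 1, |t * (1 - t)| ≤ 1 := by
    intro t ht
    rw [Set.uIoc_of_le zero_le_one] at ht
    rw [abs_le]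
    constructor <;> nlinarith [ht.1, ht.2]
  refine intervalIntegral.hasSum_integral_of_dominated_convergence
    (fun n _ => (4 * n + 5) * (1 / 3) ^ n)
    (fun n => (by fun_prop : Continuous _).aestronglyMeasurable)
    (fun n => ae_of_all _ fun t ht => norm_neg_one_pow_mul_four_mul_add_five_le (hx t ht) n)
    (ae_of_all _ fun _ _ => (hasSum_linear_mul_geometric (by norm_num) 4 5).summable)
    intervalIntegrable_const
    (ae_of_all _ fun t ht => hasSum_neg_one_pow_mul_four_mul_add_five ?_)
  nlinarith [abs_le.mp (hx t ht), sq_abs (t * (1 - t))]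

theorem HasDerivAt.mul_arctan_div {f : ℝ → ℝ} {f' x : ℝ} (hf : HasDerivAt f f' x) {c : ℝ}
    (hc : c ≠ 0) :
    HasDerivAt (fun y => c * Real.arctan (f y / c)) (c ^ 2 * f' / (f x ^ 2 + c ^ 2)) x := by
  refine ((hf.div_const c).arctan.const_mul c).congr_deriv ?_
  field_simp
  ring

-- Partial fractions, using `3 + (t * (1 - t)) ^ 2 = (t ^ 2 + t + 1) * (t ^ 2 - 3 * t + 3)`.
noncomputable def seriesSumPrimitive (t : ℝ) : ℝ :=
  t + 27 / 686 * (log (t ^ 2 + t + 1) - log (t ^ 2 - 3 * t + 3))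
    - 10 / 343 * (√3 * arctan ((2 * t + 1) / √3) + √3 * arctan ((2 * t - 3) / √3))
    + (33 - 6 * t) / (49 * (t ^ 2 + t + 1)) - (27 + 6 * t) / (49 * (t ^ 2 - 3 * t + 3))

theorem hasDerivAt_seriesSumPrimitive (t : ℝ) :
    HasDerivAt seriesSumPrimitive
      ((15 * (t * (1 - t)) ^ 2 + (t * (1 - t)) ^ 4) / (3 + (t * (1 - t)) ^ 2) ^ 2) t := by
  have hp : 0 < t ^ 2 + t + 1 := by nlinarith [sq_nonneg (2 * t + 1)]
  have hq : 0 < t ^ 2 - 3 * t + 3 := by nlinarith [sq_nonneg (2 * t - 3)]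
  have hs : √3 ≠ 0 := by positivity
  have hP : HasDerivAt (fun x => x ^ 2 + x + 1) (2 * t + 1) t := by
    simpa using ((hasDerivAt_pow 2 t).add (hasDerivAt_id' t)).add_const 1
  have hQ : HasDerivAt (fun x => x ^ 2 - 3 * x + 3) (2 * t - 3) t := by
    simpa using ((hasDerivAt_pow 2 t).sub ((hasDerivAt_id' t).const_mul 3)).add_const 3
  have hArctan :=
    (HasDerivAt.mul_arctan_div (((hasDerivAt_id' t).const_mul 2).add_const 1) hs).add
      (HasDerivAt.mul_arctan_div (((hasDerivAt_id' t).const_mul 2).sub_const 3) hs)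
  have hR₁ := (((hasDerivAt_id' t).const_mul 6).const_sub 33).div (hP.const_mul 49)
    (by positivity)
  have hR₂ := (((hasDerivAt_id' t).const_mul 6).const_add 27).div (hQ.const_mul 49)
    (by positivity)
  have h := ((((hasDerivAt_id' t).add (((hP.log hp.ne').sub (hQ.log hq.ne')).const_mul
    (27 / 686))).sub (hArctan.const_mul (10 / 343))).add hR₁).sub hR₂
  refine h.congr_deriv ?_
  rw [sq_sqrt zero_le_three]
  have hp' : t * (t + 1) + 1 ≠ 0 := by nlinarith
  have hq' : t * (t - 3) + 3 ≠ 0 := by nlinarith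
  field_simp
  ring

theorem seriesSumPrimitive_one_sub_seriesSumPrimitive_zero :
    seriesSumPrimitive 1 - seriesSumPrimitive 0
      = 1 / 49 - 10 * √3 * π / 1029 + 27 / 343 * log 3 := by
  have hπ3 : arctan (3 / √3) = π / 3 := by
    rw [div_sqrt, arctan_sqrt_three]
  have hπ6 : arctan (1 / √3) = π / 6 := by
    rw [one_div, arctan_inv_sqrt_three]
  simp only [seriesSumPrimitive]
  norm_num [neg_div, arctan_neg, hπ6, hπ3]
  ring

theorem integral_fifteen_mul_sq_add_pow_four_div_sq :
    ∫ t in (0 : ℝ)..1,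
        (15 * (t * (1 - t)) ^ 2 + (t * (1 - t)) ^ 4) / (3 + (t * (1 - t)) ^ 2) ^ 2
      = 1 / 49 - 10 * √3 * π / 1029 + 27 / 343 * log 3 := by
  have hcont : Continuous fun t : ℝ =>
      (15 * (t * (1 - t)) ^ 2 + (t * (1 - t)) ^ 4) / (3 + (t * (1 - t)) ^ 2) ^ 2 :=
    Continuous.div (by fun_prop) (by fun_prop) fun t => by positivity
  rw [intervalIntegral.integral_eq_sub_of_hasDerivAt
    (fun t _ => hasDerivAt_seriesSumPrimitive t) (hcont.intervalIntegrable 0 1)]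
  exact seriesSumPrimitive_one_sub_seriesSumPrimitive_zero

theorem stmt_8 :
    ∑' n : ℕ, (-1 : ℝ) ^ n /
      (3 ^ (n + 1) * (Nat.choose (4 * (n + 1)) (2 * (n + 1)) : ℝ)) =
    1 / 49 - 10 * Real.sqrt 3 * Real.pi / 1029 + (27 / 343) * Real.log 3 := by
  rw [← integral_fifteen_mul_sq_add_pow_four_div_sq,
    ← hasSum_integral_neg_one_pow_mul_four_mul_add_five.tsum_eq]
  exact tsum_congr fun n => (integral_neg_one_pow_mul_four_mul_add_five n).symm
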